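/- Let w : ℕ → Bool be p-periodic for some p ≥ 1, and suppose the prefix of w of length N (N ≥ 1) is written as a concatenation u₁u₂⋯u_s of s nonempty finite binary words that are pairwise distinct. Then s ≤ p + √(2·p·N). -/

import Mathlib

private def fac (w : ℕ → Bool) (n ℓ : ℕ) : List Bool := List.ofFn fun i : Fin ℓ => w (n + i)

private lemma w_mod (w : ℕ → Bool) (p : ℕ) (hp : 1 ≤ p) (hper : ∀ n, w (n + p) = w n) (n : ℕ) :
    w n = w (n % p) := by
  induction n using Nat.strong_induction_on with
  | _ n ih =>
    rcases lt_or_ge n p with h | h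
    · rw [Nat.mod_eq_of_lt h]
    · have h0 : n - p + p = n := Nat.sub_add_cancel h
      have h1 : w n = w (n - p) := by conv_lhs => rw [← h0, hper]
      have h2 : (n - p) % p = n % p := by
        conv_rhs => rw [← h0]
        rw [Nat.add_mod_right]
      rw [h1, ih (n - p) (by omega), h2]

private lemma fac_mod (w : ℕ → Bool) (p : ℕ) (hp : 1 ≤ p) (hper : ∀ n, w (n + p) = w n)
    (n ℓ : ℕ) : fac w n ℓ = fac w (n % p) ℓ := by
  unfold fac
  congr 1
  funext i
  rw [w_mod w p hp hper (n + i), w_mod w p hp hper (n % p + i), Nat.mod_add_mod]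

/-- If `w` is a `p`-periodic infinite binary word (`p ≥ 1`) and the prefix of `w` of
length `N ≥ 1` is written as a concatenation of `s` pairwise-distinct nonempty finite
binary words, then `s ≤ p + √(2·p·N)`. -/
theorem lz_parsing_bound_of_periodic (w : ℕ → Bool) (p N : ℕ) (hp : 1 ≤ p) (hN : 1 ≤ N)
    (hper : ∀ n : ℕ, w (n + p) = w n)
    (L : List (List Bool)) (hne : ∀ u ∈ L, u ≠ []) (hnd : L.Nodup)
    (hjoin : L.flatten = List.ofFn fun i : Fin N => w i) :
    (L.length : ℝ) ≤ p + Real.sqrt (2 * p * N) := by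
  classical
  -- every block is a factor at some residue < p
  have hblock : ∀ u ∈ L, ∃ a, a < p ∧ u = fac w a u.length := by
    intro u hu
    obtain ⟨s, t, hst⟩ := List.infix_of_mem_flatten hu
    rw [hjoin] at hst
    refine ⟨s.length % p, Nat.mod_lt _ hp, ?_⟩
    rw [← fac_mod w p hp hper]
    apply List.ext_getElem (by simp [fac])
    intro i hi hi'
    have hlen : s.length + (u.length + t.length) = N := by
      have := congrArg List.length hst
      simpa using this
    have hiN : s.length + i < N := by omega
    have e1 : u[i] = (s ++ u)[s.length + i]'(by simp; omega) := by
      rw [List.getElem_append_right (by omega)]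
      congr 1
      omega
    have e2 : ((s ++ u) ++ t)[s.length + i]'(by simp; omega)
        = (s ++ u)[s.length + i]'(by simp; omega) :=
      List.getElem_append_left (by simp; omega)
    have e3 : (s ++ u ++ t)[s.length + i]'(by simp; omega) = w (s.length + i) := by
      have : (List.ofFn fun j : Fin N => w j)[s.length + i]'(by simpa using hiN)
          = w (s.length + i) := by simp
      rw [← this]
      congr 1
    rw [e1, ← e2, e3]
    simp [fac]
  -- choice of residue
  set F := L.toFinset with hF
  have hFcard : F.card = L.length := List.toFinset_card_of_nodup hnd
  set a : List Bool → ℕ := fun u => if h : ∃ a, a < p ∧ u = fac w a u.length then h.choose else 0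
    with ha
  have haspec : ∀ u ∈ L, a u < p ∧ u = fac w (a u) u.length := by
    intro u hu
    have h := hblock u hu
    simp only [ha, dif_pos h]
    exact h.choose_spec
  -- count of blocks of length ≤ k
  have hcount : ∀ k : ℕ, (F.filter fun u => u.length ≤ k).card ≤ p * k := by
    intro k
    have hle : (F.filter fun u => u.length ≤ k).card
        ≤ ((Finset.Icc 1 k) ×ˢ (Finset.range p)).card := by
      apply Finset.card_le_card_of_injOn (fun u => (u.length, a u))
      · intro u hu
        simp only [Finset.mem_coe, Finset.mem_filter, hF, List.mem_toFinset] at hu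
        obtain ⟨huL, hulen⟩ := hu
        have h1 : 1 ≤ u.length := List.length_pos_iff.mpr (hne u huL)
        simp only [Finset.mem_coe, Finset.mem_product, Finset.mem_Icc, Finset.mem_range]
        exact ⟨⟨h1, hulen⟩, (haspec u huL).1⟩
      · intro u hu v hv heq
        simp only [Finset.mem_coe, Finset.mem_filter, hF, List.mem_toFinset] at hu hv
        have h1 := (haspec u hu.1).2
        have h2 := (haspec v hv.1).2
        have hl : u.length = v.length := congrArg Prod.fst heq
        have hav : a u = a v := congrArg Prod.snd heq
        rw [h1, h2, hl, hav]
    have hcardp : ((Finset.Icc 1 k) ×ˢ (Finset.range p)).card = k * p := by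
      simp [Finset.card_product]
    rw [hcardp, mul_comm] at hle
    exact hle
  -- N is sum of lengths over F
  have hNsum : N = ∑ u ∈ F, u.length := by
    have h1 : (L.map List.length).sum = N := by
      rw [← List.length_flatten, hjoin]
      simp
    rw [hF, List.sum_toFinset _ hnd, h1]
  set s := L.length with hs
  set m := s / p with hm
  -- for k < m, many blocks are long
  have hlong : ∀ k, k < m → p * (m - k) ≤ (F.filter fun u => k < u.length).card := by
    intro k hk
    have hsplit := Finset.card_filter_add_card_filter_not (s := F)
      (p := fun u => u.length ≤ k)
    have hc := hcount k
    have hpm : p * m ≤ s := by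
      rw [hm, mul_comm]
      exact Nat.div_mul_le_self s p
    have heq : p * (m - k) + p * k = p * m := by
      rw [← Nat.mul_add, Nat.sub_add_cancel hk.le]
    have hneg : (F.filter fun u => ¬ u.length ≤ k).card
        = (F.filter fun u => k < u.length).card := by
      congr 1
      ext u
      simp only [Finset.mem_filter, Nat.not_le]
    rw [hFcard] at hsplit
    omega
  -- sum over k < m of long-block counts is at most N
  have hsum1 : ∑ k ∈ Finset.range m, (F.filter fun u => k < u.length).card ≤ N := by
    rw [hNsum]
    have hrw : ∀ k, (F.filter fun u => k < u.length).card
        = ∑ u ∈ F, if k < u.length then 1 else 0 := fun k => Finset.card_filter _ _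
    calc ∑ k ∈ Finset.range m, (F.filter fun u => k < u.length).card
        = ∑ k ∈ Finset.range m, ∑ u ∈ F, if k < u.length then 1 else 0 := by
          simp only [hrw]
      _ = ∑ u ∈ F, ∑ k ∈ Finset.range m, if k < u.length then 1 else 0 := Finset.sum_comm
      _ ≤ ∑ u ∈ F, u.length := by
          apply Finset.sum_le_sum
          intro u _
          have : ((Finset.range m).filter fun k => k < u.length).card
              = (Finset.range (min u.length m)).card := by
            congr 1
            ext k
            simp only [Finset.mem_filter, Finset.mem_range, lt_min_iff]
            tauto
          rw [← Finset.card_filter, this]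
          simp [min_le_left]
  -- Gauss bound: p * m * (m+1) ≤ 2 * N
  have hgauss : ∑ k ∈ Finset.range m, (m - k) = ∑ k ∈ Finset.range m, (k + 1) := by
    rw [← Finset.sum_range_reflect]
    apply Finset.sum_congr rfl
    intro k hk
    simp only [Finset.mem_range] at hk
    omega
  have hgauss2 : (∑ k ∈ Finset.range m, (m - k)) * 2 = m * (m + 1) := by
    rw [hgauss]
    have : ∑ k ∈ Finset.range m, (k + 1) = ∑ k ∈ Finset.range (m + 1), k := by
      rw [Finset.sum_range_succ' (fun k => k) m]
      simp
    rw [this, Finset.sum_range_id_mul_two]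
    simp [Nat.mul_comm]
  have hkey : p * (m * (m + 1)) ≤ 2 * N := by
    have h1 : ∑ k ∈ Finset.range m, p * (m - k)
        ≤ ∑ k ∈ Finset.range m, (F.filter fun u => k < u.length).card := by
      apply Finset.sum_le_sum
      intro k hk
      exact hlong k (Finset.mem_range.mp hk)
    have h2 : ∑ k ∈ Finset.range m, p * (m - k) = p * ∑ k ∈ Finset.range m, (m - k) :=
      (Finset.mul_sum _ _ _).symm
    have h3 : p * ((∑ k ∈ Finset.range m, (m - k)) * 2) = p * (m * (m + 1)) := by
      rw [hgauss2]
    calc p * (m * (m + 1)) = (∑ k ∈ Finset.range m, p * (m - k)) * 2 := by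
          rw [h2, ← h3]; ring
      _ ≤ N * 2 := by
          apply Nat.mul_le_mul_right
          exact h1.trans hsum1
      _ = 2 * N := by ring
  -- finish in the reals
  have hsm : s ≤ p + p * m := by
    have hdm := Nat.div_add_mod s p
    rw [← hm] at hdm
    have hmod : s % p < p := Nat.mod_lt _ hp
    omega
  have hmm : p * (m * m) ≤ 2 * N := le_trans (by nlinarith) hkey
  have hsqrt : (p * m : ℝ) ≤ Real.sqrt (2 * p * N) := by
    rw [show ((p : ℝ) * m) = Real.sqrt ((p * m) ^ 2) from (Real.sqrt_sq (by positivity)).symm]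
    apply Real.sqrt_le_sqrt
    have hcast : (p : ℝ) * (m * m) ≤ 2 * N := by exact_mod_cast hmm
    have hp' : (1 : ℝ) ≤ p := by exact_mod_cast hp
    nlinarith [hcast, hp', sq_nonneg ((p : ℝ) * m)]
  have hsm' : (s : ℝ) ≤ p + p * m := by exact_mod_cast hsm
  calc (L.length : ℝ) = s := by rw [hs]
    _ ≤ p + p * m := hsm'
    _ ≤ p + Real.sqrt (2 * p * N) := by linarith
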